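/- Let (C, A) ∈ S̃_{-1}^{p×N} × S̃_{-1}^{N×N} and suppose the complex pair (E[C], E[A]) is observable, i.e. there is some q such that [E[C]; E[C]E[A]; …; E[C]E[A]^{q-1}] is left invertible over ℂ. Then the only f ∈ S̃_{-1}^{N} with C A^k f = 0 for all 0 ≤ k ≤ q−1 is f = 0; i.e., the pair (C, A) is observable over S̃_{-1}. -/

import Mathlib

/-- Weight `(2ℕ)^α = ∏_k (2 i_k)` of a word (letter `i` represents `z_{i+1}`). -/
noncomputable def ncWeight (α : FreeMonoid ℕ) : ℝ :=
  (FreeMonoid.toList α |>.map (fun i => (2 * (i + 1) : ℝ))).prod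

/-- Wick product: monoid convolution `(f ⊗ g)_γ = ∑_{αβ = γ} f_α g_β`. -/
noncomputable def wick (f g : FreeMonoid ℕ → ℂ) (γ : FreeMonoid ℕ) : ℂ :=
  ∑ j ∈ Finset.range ((FreeMonoid.toList γ).length + 1),
    f (FreeMonoid.ofList ((FreeMonoid.toList γ).take j)) *
      g (FreeMonoid.ofList ((FreeMonoid.toList γ).drop j))

/-- The unit for the Wick product: the indicator of the empty word. -/
noncomputable def wickUnit : FreeMonoid ℕ → ℂ :=
  fun γ => if FreeMonoid.toList γ = [] then 1 else 0

/-- Membership in the non-commutative Kondratiev space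
`S̃₋₁ = ⋃_p L²(ℓ̃, μ_{-p})`. -/
def memS (f : FreeMonoid ℕ → ℂ) : Prop :=
  ∃ p : ℕ, Summable (fun α => ‖f α‖ ^ 2 * ncWeight α ^ (-(p : ℤ)))

/-- Wick (entrywise-convolution) product of matrices over `S̃₋₁`. -/
noncomputable def wMul {a b c : ℕ} (M : Matrix (Fin a) (Fin b) (FreeMonoid ℕ → ℂ))
    (N : Matrix (Fin b) (Fin c) (FreeMonoid ℕ → ℂ)) :
    Matrix (Fin a) (Fin c) (FreeMonoid ℕ → ℂ) :=
  fun i j => ∑ k : Fin b, wick (M i k) (N k j)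

/-- Wick powers of a square matrix over `S̃₋₁`; `A^0` is the identity. -/
noncomputable def wPowM {N : ℕ} (A : Matrix (Fin N) (Fin N) (FreeMonoid ℕ → ℂ)) :
    ℕ → Matrix (Fin N) (Fin N) (FreeMonoid ℕ → ℂ)
  | 0 => fun i j => if i = j then wickUnit else 0
  | k + 1 => wMul A (wPowM A k)

/-- Entrywise generalized expectation of a matrix over `S̃₋₁`. -/
def EM {a b : ℕ} (M : Matrix (Fin a) (Fin b) (FreeMonoid ℕ → ℂ)) :
    Matrix (Fin a) (Fin b) ℂ := fun i j => M i j 1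


lemma wick_one (g h : FreeMonoid ℕ → ℂ) : wick g h 1 = g 1 * h 1 := by
  simp [wick, FreeMonoid.toList_one]

lemma EM_wMul {a b c : ℕ} (M : Matrix (Fin a) (Fin b) (FreeMonoid ℕ → ℂ))
    (N : Matrix (Fin b) (Fin c) (FreeMonoid ℕ → ℂ)) :
    EM (wMul M N) = EM M * EM N := by
  funext i j
  simp [EM, wMul, Matrix.mul_apply, wick_one]

lemma EM_wPowM {N : ℕ} (A : Matrix (Fin N) (Fin N) (FreeMonoid ℕ → ℂ)) (k : ℕ) :
    EM (wPowM A k) = (EM A) ^ k := by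
  induction k with
  | zero =>
      funext i j
      simp only [wPowM, EM, pow_zero, Matrix.one_apply]
      split_ifs <;> simp [wickUnit, FreeMonoid.toList_one]
  | succ k ih =>
      rw [wPowM, EM_wMul, ih, pow_succ']

/-- If `(C, A)` are matrices over `S̃₋₁` and the complex pair `(E[C], E[A])` is
observable — i.e. for some `q` the stacked matrix `[E[C]; E[C]E[A]; …; E[C]E[A]^{q-1}]`
is left invertible over ℂ — then the pair `(C, A)` is observable over `S̃₋₁`: the only
vector `f ∈ S̃₋₁^N` with `C ⊗ A^{⊗k} ⊗ f = 0` for all `0 ≤ k ≤ q−1` is `f = 0`. -/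
theorem observable_of_expectation_observable
    {p N q : ℕ} (C : Matrix (Fin p) (Fin N) (FreeMonoid ℕ → ℂ))
    (A : Matrix (Fin N) (Fin N) (FreeMonoid ℕ → ℂ))
    (hC : ∀ i j, memS (C i j)) (hA : ∀ i j, memS (A i j))
    (hobs : ∃ L : Matrix (Fin N) (Fin q × Fin p) ℂ,
      L * (Matrix.of fun (ki : Fin q × Fin p) j => (EM C * EM A ^ (ki.1 : ℕ)) ki.2 j) = 1)
    (f : Fin N → FreeMonoid ℕ → ℂ) (hfS : ∀ i, memS (f i))
    (hker : ∀ k : ℕ, k < q →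
      wMul (wMul C (wPowM A k)) (fun i (_ : Fin 1) => f i) = 0) :
    f = 0 := by
  classical
  obtain ⟨L, hL⟩ := hobs
  suffices H : ∀ n (γ : FreeMonoid ℕ), (FreeMonoid.toList γ).length = n → ∀ i, f i γ = 0 by
    funext i γ
    exact H _ γ rfl i
  intro n
  induction n using Nat.strong_induction_on with
  | _ n IH =>
    intro γ hγ i0
    set v : Fin N → ℂ := fun j => f j γ with hv
    have hv0 : ∀ k, k < q → ∀ i : Fin p,
        ∑ j, (EM C * EM A ^ k) i j * v j = 0 := by
      intro k hk i
      have h0 := congrFun (congrFun (congrFun (hker k hk) i) 0) γ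
      set G := wMul C (wPowM A k) with hG
      have hexp : ∀ j : Fin N, wick (G i j) (f j) γ = G i j 1 * f j γ := by
        intro j
        rw [wick]
        rw [hγ, Finset.sum_range_succ']
        have hzero : ∀ m ∈ Finset.range n,
            G i j (FreeMonoid.ofList ((FreeMonoid.toList γ).take (m + 1))) *
              f j (FreeMonoid.ofList ((FreeMonoid.toList γ).drop (m + 1))) = 0 := by
          intro m hm
          rw [Finset.mem_range] at hm
          have hlen : (FreeMonoid.toList (FreeMonoid.ofList
              ((FreeMonoid.toList γ).drop (m + 1)))).length
              = n - (m + 1) := by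
            simp [hγ]
          have : f j (FreeMonoid.ofList ((FreeMonoid.toList γ).drop (m + 1))) = 0 :=
            IH (n - (m + 1)) (Nat.sub_lt (Nat.lt_of_lt_of_le (Nat.succ_pos m) (Nat.succ_le_of_lt hm))
              (Nat.succ_pos m)) _ hlen j
          rw [this, mul_zero]
        rw [Finset.sum_eq_zero hzero, zero_add]
        simp
      have h1 : (∑ j, (EM G) i j * v j) = 0 := by
        have : wMul G (fun i (_ : Fin 1) => f i) i 0 γ
            = ∑ j, (EM G) i j * v j := by
          simp only [wMul, Finset.sum_apply]
          exact Finset.sum_congr rfl fun j _ => hexp j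
        rw [← this, h0]
        rfl
      rw [hG, EM_wMul, EM_wPowM] at h1
      exact h1
    have hObs : (Matrix.of fun (ki : Fin q × Fin p) j =>
        (EM C * EM A ^ (ki.1 : ℕ)) ki.2 j).mulVec v = 0 := by
      funext ki
      obtain ⟨k, i⟩ := ki
      simpa [Matrix.mulVec, dotProduct] using hv0 k k.isLt i
    have : v = 0 := by
      have h2 : (L * (Matrix.of fun (ki : Fin q × Fin p) j =>
          (EM C * EM A ^ (ki.1 : ℕ)) ki.2 j)).mulVec v = v := by
        rw [hL, Matrix.one_mulVec]
      rw [← Matrix.mulVec_mulVec, hObs, Matrix.mulVec_zero] at h2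
      exact h2.symm
    exact congrFun this i0
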